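/- Let 0 ≤ α₁ < 1, 0 ≤ α₂ < 1 and β₁ > 1, β₂ > 1. Then there exists a constant C = C(α₁,α₂,β₁,β₂) > 0 such that for every t > 0 one has ∫₀ᵗ ((t−τ)^{α₁} + (t−τ)^{β₁})^{−1} · (τ^{α₂} + τ^{β₂})^{−1} dτ ≤ C · (t^{max{α₁,α₂}} + t^{min{β₁,β₂}})^{−1}. -/

import Mathlib

/-!
Both weights `w(s) = (s^α + s^β)⁻¹` are decreasing on `(0, ∞)` and integrable there (near `0`
they are below `s^(-α)`, near `∞` below `s^(-β)`, and `α < 1 < β`). Splitting `(0, t)` at `t / 2`,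
on each half one factor is at most its value at `t / 2` and the other is integrated over all of
`(0, ∞)`, so the integral is at most `w₁(t/2) ∫₀^∞ w₂ + w₂(t/2) ∫₀^∞ w₁`. Finally
`t^c ≤ t^α + t^β` for every `c ∈ [α, β]`, which compares `wᵢ(t/2)` with
`(t^{max α} + t^{min β})⁻¹`.
-/

open MeasureTheory Set

namespace Real

theorem rpow_le_rpow_add_rpow {a b c t : ℝ} (ht : 0 < t) (hac : a ≤ c) (hcb : c ≤ b) :
    t ^ c ≤ t ^ a + t ^ b := by
  rcases le_total t 1 with h | h
  · exact (rpow_le_rpow_of_exponent_ge ht h hac).trans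
      (le_add_of_nonneg_right (rpow_nonneg ht.le b))
  · exact (rpow_le_rpow_of_exponent_le h hcb).trans
      (le_add_of_nonneg_left (rpow_nonneg ht.le a))

theorem rpow_add_rpow_le_two_pow_mul_half {a b t : ℝ} (ht : 0 ≤ t) (hab : a ≤ b) :
    t ^ a + t ^ b ≤ 2 ^ b * ((t / 2) ^ a + (t / 2) ^ b) := by
  have hsplit : ∀ c : ℝ, t ^ c = 2 ^ c * (t / 2) ^ c := fun c => by
    rw [← mul_rpow zero_le_two (by positivity), mul_div_cancel₀ t two_ne_zero]
  rw [hsplit a, hsplit b, mul_add]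
  gcongr
  exact one_le_two

theorem inv_rpow_add_rpow_half_le {a b m M t : ℝ} (ht : 0 < t) (hm : m ∈ Icc a b)
    (hM : M ∈ Icc a b) :
    ((t / 2) ^ a + (t / 2) ^ b)⁻¹ ≤ 2 ^ (b + 1) * (t ^ m + t ^ M)⁻¹ := by
  have hab : a ≤ b := hm.1.trans hm.2
  have h : t ^ m + t ^ M ≤ 2 ^ (b + 1) * ((t / 2) ^ a + (t / 2) ^ b) :=
    calc t ^ m + t ^ M ≤ 2 * (t ^ a + t ^ b) := by
          linarith [rpow_le_rpow_add_rpow ht hm.1 hm.2, rpow_le_rpow_add_rpow ht hM.1 hM.2]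
      _ ≤ 2 ^ (b + 1) * ((t / 2) ^ a + (t / 2) ^ b) := by
          rw [rpow_add_one two_ne_zero, mul_comm _ (2 : ℝ), mul_assoc]
          gcongr
          exact rpow_add_rpow_le_two_pow_mul_half ht.le hab
  have hc : (2 : ℝ) ^ (b + 1) ≠ 0 := by positivity
  calc ((t / 2) ^ a + (t / 2) ^ b)⁻¹
      = 2 ^ (b + 1) * (2 ^ (b + 1) * ((t / 2) ^ a + (t / 2) ^ b))⁻¹ := by
        rw [mul_inv, ← mul_assoc, mul_inv_cancel₀ hc, one_mul]
    _ ≤ 2 ^ (b + 1) * (t ^ m + t ^ M)⁻¹ := by gcongr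

theorem antitoneOn_inv_rpow_add_rpow {a b : ℝ} (ha : 0 ≤ a) (hb : 0 ≤ b) :
    AntitoneOn (fun s : ℝ => (s ^ a + s ^ b)⁻¹) (Ioi 0) := fun x (hx : 0 < x) y _ hxy => by
  dsimp only
  gcongr

theorem integrableOn_Ioi_inv_rpow_add_rpow {a b : ℝ} (ha : a < 1) (hb : 1 < b) :
    IntegrableOn (fun s : ℝ => (s ^ a + s ^ b)⁻¹) (Ioi 0) := by
  have hmeas : AEStronglyMeasurable (fun s : ℝ => (s ^ a + s ^ b)⁻¹) := by fun_prop
  rw [← Ioc_union_Ioi_eq_Ioi zero_le_one]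
  refine IntegrableOn.union ?_ ?_
  · have hint : IntegrableOn (fun s : ℝ => s ^ (-a)) (Ioc 0 1) := by
      rw [← intervalIntegrable_iff_integrableOn_Ioc_of_le zero_le_one]
      exact intervalIntegral.intervalIntegrable_rpow' (by linarith)
    refine hint.mono' hmeas.restrict ?_
    filter_upwards [ae_restrict_mem measurableSet_Ioc] with s hs
    have hs₀ : 0 < s := hs.1
    rw [norm_inv, norm_of_nonneg (by positivity), rpow_neg hs₀.le]
    gcongr
    exact le_add_of_nonneg_right (by positivity)
  · have hint : IntegrableOn (fun s : ℝ => s ^ (-b)) (Ioi 1) :=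
      integrableOn_Ioi_rpow_of_lt (by linarith) one_pos
    refine hint.mono' hmeas.restrict ?_
    filter_upwards [ae_restrict_mem measurableSet_Ioi] with s hs
    have hs₀ : 0 < s := zero_lt_one.trans hs
    rw [norm_inv, norm_of_nonneg (by positivity), rpow_neg hs₀.le]
    gcongr
    exact le_add_of_nonneg_left (by positivity)

end Real

theorem integrableOn_Ioo_comp_sub_left_iff {E : Type*} [NormedAddCommGroup E]
    (f : ℝ → E) (t : ℝ) :
    IntegrableOn (fun τ => f (t - τ)) (Ioo 0 t) ↔ IntegrableOn f (Ioo 0 t) := by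
  have h := (Measure.measurePreserving_sub_left volume t).integrableOn_comp_preimage
    (measurableEmbedding_subLeft t) (f := f) (s := Ioo 0 t)
  simpa only [Function.comp_def, preimage_const_sub_Ioo, sub_self, sub_zero] using h

theorem setIntegral_Ioo_comp_sub_left {E : Type*} [NormedAddCommGroup E] [NormedSpace ℝ E]
    (f : ℝ → E) (t : ℝ) :
    ∫ τ in Ioo 0 t, f (t - τ) = ∫ τ in Ioo 0 t, f τ := by
  have h := (Measure.measurePreserving_sub_left volume t).setIntegral_preimage_emb
    (measurableEmbedding_subLeft t) f (Ioo 0 t)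
  simpa only [preimage_const_sub_Ioo, sub_self, sub_zero] using h

theorem integral_Ioo_comp_sub_mul_le {f g : ℝ → ℝ} (hf : AntitoneOn f (Ioi 0))
    (hg : AntitoneOn g (Ioi 0)) (hf₀ : ∀ s ∈ Ioi 0, 0 ≤ f s) (hg₀ : ∀ s ∈ Ioi 0, 0 ≤ g s)
    (hfi : IntegrableOn f (Ioi 0)) (hgi : IntegrableOn g (Ioi 0)) {t : ℝ} (ht : 0 < t) :
    ∫ τ in Ioo 0 t, f (t - τ) * g τ ≤
      f (t / 2) * (∫ s in Ioi 0, g s) + g (t / 2) * ∫ s in Ioi 0, f s := by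
  have ht₂ : t / 2 ∈ Ioi 0 := half_pos ht
  -- On `(0, t)` either `τ ≤ t / 2 ≤ t - τ` or `t - τ ≤ t / 2 ≤ τ`.
  have hpt : ∀ τ ∈ Ioo 0 t,
      f (t - τ) * g τ ≤ f (t / 2) * g τ + g (t / 2) * f (t - τ) := by
    rintro τ ⟨hτ₀, hτt⟩
    have hτ : τ ∈ Ioi 0 := hτ₀
    have hτ' : t - τ ∈ Ioi 0 := sub_pos.2 hτt
    rcases le_total τ (t / 2) with h | h
    · calc f (t - τ) * g τ ≤ f (t / 2) * g τ :=
            mul_le_mul_of_nonneg_right (hf ht₂ hτ' (by linarith)) (hg₀ τ hτ)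
        _ ≤ _ := le_add_of_nonneg_right (mul_nonneg (hg₀ _ ht₂) (hf₀ _ hτ'))
    · calc f (t - τ) * g τ ≤ g (t / 2) * f (t - τ) := by
            rw [mul_comm]; exact mul_le_mul_of_nonneg_right (hg ht₂ hτ h) (hf₀ _ hτ')
        _ ≤ _ := le_add_of_nonneg_left (mul_nonneg (hf₀ _ ht₂) (hg₀ τ hτ))
  have hgi' : IntegrableOn g (Ioo 0 t) := hgi.mono_set Ioo_subset_Ioi_self
  have hfi' : IntegrableOn (fun τ => f (t - τ)) (Ioo 0 t) :=
    (integrableOn_Ioo_comp_sub_left_iff f t).2 (hfi.mono_set Ioo_subset_Ioi_self)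
  have hIoo_le : ∀ {h : ℝ → ℝ}, (∀ s ∈ Ioi 0, 0 ≤ h s) → IntegrableOn h (Ioi 0) →
      ∫ τ in Ioo 0 t, h τ ≤ ∫ s in Ioi 0, h s := fun h₀ hi =>
    setIntegral_mono_set hi (ae_restrict_of_forall_mem measurableSet_Ioi h₀)
      Ioo_subset_Ioi_self.eventuallyLE
  calc ∫ τ in Ioo 0 t, f (t - τ) * g τ
      ≤ ∫ τ in Ioo 0 t, (f (t / 2) * g τ + g (t / 2) * f (t - τ)) := by
        refine integral_mono_of_nonneg ?_ ((hgi'.const_mul _).add (hfi'.const_mul _))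
          (ae_restrict_of_forall_mem measurableSet_Ioo hpt)
        refine ae_restrict_of_forall_mem measurableSet_Ioo fun τ ⟨hτ₀, hτt⟩ => ?_
        exact mul_nonneg (hf₀ _ (sub_pos.2 hτt)) (hg₀ τ hτ₀)
    _ = f (t / 2) * (∫ τ in Ioo 0 t, g τ) + g (t / 2) * ∫ τ in Ioo 0 t, f τ := by
        rw [integral_add (hgi'.const_mul _) (hfi'.const_mul _), integral_const_mul,
          integral_const_mul, setIntegral_Ioo_comp_sub_left]
    _ ≤ f (t / 2) * (∫ s in Ioi 0, g s) + g (t / 2) * ∫ s in Ioi 0, f s :=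
        add_le_add (mul_le_mul_of_nonneg_left (hIoo_le hg₀ hgi) (hf₀ _ ht₂))
          (mul_le_mul_of_nonneg_left (hIoo_le hf₀ hfi) (hg₀ _ ht₂))

/-- **Technical integral estimate.**
Let `0 ≤ α₁ < 1`, `0 ≤ α₂ < 1` and `β₁ > 1`, `β₂ > 1`. Then there is a constant
`C = C(α₁, α₂, β₁, β₂) > 0` such that for every `t > 0`,
`∫₀ᵗ ((t−τ)^{α₁} + (t−τ)^{β₁})⁻¹ (τ^{α₂} + τ^{β₂})⁻¹ dτ
  ≤ C · (t^{max(α₁,α₂)} + t^{min(β₁,β₂)})⁻¹`. -/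
theorem integral_convolution_decay_bound (α₁ α₂ β₁ β₂ : ℝ)
    (hα₁ : 0 ≤ α₁) (hα₁' : α₁ < 1) (hα₂ : 0 ≤ α₂) (hα₂' : α₂ < 1)
    (hβ₁ : 1 < β₁) (hβ₂ : 1 < β₂) :
    ∃ C : ℝ, 0 < C ∧ ∀ t : ℝ, 0 < t →
      ∫ τ in Set.Ioo (0 : ℝ) t,
          ((t - τ) ^ α₁ + (t - τ) ^ β₁)⁻¹ * (τ ^ α₂ + τ ^ β₂)⁻¹ ≤
        C * (t ^ max α₁ α₂ + t ^ min β₁ β₂)⁻¹ := by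
  set K₁ := ∫ s in Ioi (0 : ℝ), (s ^ α₁ + s ^ β₁)⁻¹
  set K₂ := ∫ s in Ioi (0 : ℝ), (s ^ α₂ + s ^ β₂)⁻¹
  have hK₁ : 0 ≤ K₁ :=
    setIntegral_nonneg measurableSet_Ioi fun s (hs : 0 < s) => by positivity
  have hK₂ : 0 ≤ K₂ :=
    setIntegral_nonneg measurableSet_Ioi fun s (hs : 0 < s) => by positivity
  refine ⟨2 ^ (β₁ + 1) * K₂ + 2 ^ (β₂ + 1) * K₁ + 1, by positivity, fun t ht => ?_⟩
  have hm : max α₁ α₂ ∈ Icc α₁ β₁ ∩ Icc α₂ β₂ :=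
    ⟨⟨le_max_left _ _, max_le (by linarith) (by linarith)⟩,
      ⟨le_max_right _ _, max_le (by linarith) (by linarith)⟩⟩
  have hM : min β₁ β₂ ∈ Icc α₁ β₁ ∩ Icc α₂ β₂ :=
    ⟨⟨le_min (by linarith) (by linarith), min_le_left _ _⟩,
      ⟨le_min (by linarith) (by linarith), min_le_right _ _⟩⟩
  have hD : 0 ≤ (t ^ max α₁ α₂ + t ^ min β₁ β₂)⁻¹ := by positivity
  calc _ ≤ ((t / 2) ^ α₁ + (t / 2) ^ β₁)⁻¹ * K₂ +
          ((t / 2) ^ α₂ + (t / 2) ^ β₂)⁻¹ * K₁ :=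
        integral_Ioo_comp_sub_mul_le
          (Real.antitoneOn_inv_rpow_add_rpow hα₁ (by linarith))
          (Real.antitoneOn_inv_rpow_add_rpow hα₂ (by linarith))
          (fun s (hs : 0 < s) => by positivity) (fun s (hs : 0 < s) => by positivity)
          (Real.integrableOn_Ioi_inv_rpow_add_rpow hα₁' hβ₁)
          (Real.integrableOn_Ioi_inv_rpow_add_rpow hα₂' hβ₂) ht
    _ ≤ 2 ^ (β₁ + 1) * (t ^ max α₁ α₂ + t ^ min β₁ β₂)⁻¹ * K₂ +
          2 ^ (β₂ + 1) * (t ^ max α₁ α₂ + t ^ min β₁ β₂)⁻¹ * K₁ := by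
        gcongr
        · exact Real.inv_rpow_add_rpow_half_le ht hm.1 hM.1
        · exact Real.inv_rpow_add_rpow_half_le ht hm.2 hM.2
    _ ≤ _ := by nlinarith
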